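/- The structure G' is primitive: every equivalence relation on V that is definable in G' by a first-order formula without parameters is either the equality relation on V or the full relation V × V. -/
import Mathlib


open FirstOrder FirstOrder.Language

/-- The vertex set: all 2-element subsets of `M₀`. -/
def V (M₀ : Type) : Type := {s : Set M₀ // s.ncard = 2}

/-- The adjacency relation: two 2-subsets are adjacent iff they are distinct and intersect
in exactly one point. -/
def ER {M₀ : Type} (u v : V M₀) : Prop :=
  u ≠ v ∧ (u.1 ∩ v.1).ncard = 1

/-- The ternary relation: three pairwise distinct 2-subsets with a common point. -/
def QR {M₀ : Type} (a b c : V M₀) : Prop :=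
  a ≠ b ∧ a ≠ c ∧ b ≠ c ∧ (a.1 ∩ b.1 ∩ c.1).Nonempty

/-- The symbols of the language with one binary relation symbol `E` and one ternary
relation symbol `Q`. -/
inductive EQRel : ℕ → Type
  | e : EQRel 2
  | q : EQRel 3

/-- The language with one binary relation symbol `E` and one ternary symbol `Q`. -/
def Leq : FirstOrder.Language := ⟨fun _ => Empty, EQRel⟩

/-- The structure `G'` on `V M₀`: `E(u,v)` iff `u ≠ v` and `|u ∩ v| = 1`; `Q(a,b,c)` iff
`a,b,c` are pairwise distinct and `a ∩ b ∩ c ≠ ∅`. -/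
instance (M₀ : Type) : Leq.Structure (V M₀) where
  funMap := fun f _ => f.elim
  RelMap := fun r x => match r with
    | .e => ER (x 0) (x 1)
    | .q => QR (x 0) (x 1) (x 2)

section Aux

variable {M₀ : Type}

/-- Extend an injection on a finite set of a countably infinite type to a permutation. -/
lemma exists_perm_extend [Countable M₀] [Infinite M₀] {s : Set M₀} (hs : s.Finite)
    {f : M₀ → M₀} (hf : Set.InjOn f s) : ∃ σ : M₀ ≃ M₀, ∀ x ∈ s, σ x = f x := by
  classical
  have h1 : Infinite (sᶜ : Set M₀) := hs.infinite_compl.to_subtype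
  have ht : (f '' s).Finite := hs.image f
  have h2 : Infinite ((f '' s)ᶜ : Set M₀) := ht.infinite_compl.to_subtype
  obtain ⟨g⟩ : Nonempty ((sᶜ : Set M₀) ≃ ((f '' s)ᶜ : Set M₀)) := nonempty_equiv_of_countable
  let e : s ≃ (f '' s : Set M₀) := Equiv.Set.imageOfInjOn f s hf
  refine ⟨(Equiv.Set.sumCompl s).symm.trans ((e.sumCongr g).trans
    (Equiv.Set.sumCompl (f '' s))), fun x hx => ?_⟩
  simp [Equiv.Set.sumCompl_symm_apply_of_mem hx, e, Equiv.Set.imageOfInjOn]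

lemma exists_perm_three [Countable M₀] [Infinite M₀] {x a b x' a' b' : M₀}
    (hxa : x ≠ a) (hxb : x ≠ b) (hab : a ≠ b)
    (hxa' : x' ≠ a') (hxb' : x' ≠ b') (hab' : a' ≠ b') :
    ∃ σ : M₀ ≃ M₀, σ x = x' ∧ σ a = a' ∧ σ b = b' := by
  classical
  set f : M₀ → M₀ := fun z => if z = x then x' else if z = a then a' else
    if z = b then b' else z with hfdef
  have hfx : f x = x' := by simp [hfdef]
  have hfa : f a = a' := by simp [hfdef, hxa.symm]
  have hfb : f b = b' := by simp [hfdef, hxb.symm, hab.symm]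
  have hinj : Set.InjOn f {x, a, b} := by
    intro p hp q hq hpq
    simp only [Set.mem_insert_iff, Set.mem_singleton_iff] at hp hq
    rcases hp with rfl | rfl | rfl <;> rcases hq with rfl | rfl | rfl <;> simp_all
  obtain ⟨σ, hσ⟩ := exists_perm_extend (Set.toFinite _) hinj
  exact ⟨σ, by rw [hσ x (by simp), hfx], by rw [hσ a (by simp), hfa],
    by rw [hσ b (by simp), hfb]⟩

lemma exists_perm_four [Countable M₀] [Infinite M₀] {a b c d a' b' c' d' : M₀}
    (hab : a ≠ b) (hac : a ≠ c) (had : a ≠ d) (hbc : b ≠ c) (hbd : b ≠ d) (hcd : c ≠ d)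
    (hab' : a' ≠ b') (hac' : a' ≠ c') (had' : a' ≠ d') (hbc' : b' ≠ c') (hbd' : b' ≠ d')
    (hcd' : c' ≠ d') :
    ∃ σ : M₀ ≃ M₀, σ a = a' ∧ σ b = b' ∧ σ c = c' ∧ σ d = d' := by
  classical
  set f : M₀ → M₀ := fun z => if z = a then a' else if z = b then b' else
    if z = c then c' else if z = d then d' else z with hfdef
  have hfa : f a = a' := by simp [hfdef]
  have hfb : f b = b' := by simp [hfdef, hab.symm]
  have hfc : f c = c' := by simp [hfdef, hac.symm, hbc.symm]
  have hfd : f d = d' := by simp [hfdef, had.symm, hbd.symm, hcd.symm]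
  have hinj : Set.InjOn f {a, b, c, d} := by
    intro p hp q hq hpq
    simp only [Set.mem_insert_iff, Set.mem_singleton_iff] at hp hq
    rcases hp with rfl | rfl | rfl | rfl <;> rcases hq with rfl | rfl | rfl | rfl <;> simp_all
  obtain ⟨σ, hσ⟩ := exists_perm_extend (Set.toFinite _) hinj
  exact ⟨σ, by rw [hσ a (by simp), hfa], by rw [hσ b (by simp), hfb],
    by rw [hσ c (by simp), hfc], by rw [hσ d (by simp), hfd]⟩

/-- The permutation of vertices induced by a permutation of points. -/
def permV (σ : M₀ ≃ M₀) : V M₀ ≃ V M₀ where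
  toFun u := ⟨σ '' u.1, by rw [Set.ncard_image_of_injective _ σ.injective]; exact u.2⟩
  invFun u := ⟨σ.symm '' u.1, by rw [Set.ncard_image_of_injective _ σ.symm.injective]; exact u.2⟩
  left_inv u := Subtype.ext (by simp)
  right_inv u := Subtype.ext (by simp)

lemma permV_fst (σ : M₀ ≃ M₀) (u : V M₀) : (permV σ u).1 = σ '' u.1 := rfl

lemma ER_permV (σ : M₀ ≃ M₀) (u v : V M₀) : ER (permV σ u) (permV σ v) ↔ ER u v := by
  unfold ER
  rw [permV_fst, permV_fst, ← Set.image_inter σ.injective,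
    Set.ncard_image_of_injective _ σ.injective, (permV σ).injective.ne_iff]

lemma QR_permV (σ : M₀ ≃ M₀) (a b c : V M₀) :
    QR (permV σ a) (permV σ b) (permV σ c) ↔ QR a b c := by
  unfold QR
  rw [permV_fst, permV_fst, permV_fst, ← Set.image_inter σ.injective,
    ← Set.image_inter σ.injective, Set.image_nonempty,
    (permV σ).injective.ne_iff, (permV σ).injective.ne_iff, (permV σ).injective.ne_iff]

/-- The induced permutation as a first-order equivalence of structures. -/
def permVE (σ : M₀ ≃ M₀) : (V M₀) ≃[Leq] (V M₀) where
  toEquiv := permV σ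
  map_fun' := fun {n} f _ => f.elim
  map_rel' := fun {n} r x => by
    cases r
    · exact ER_permV σ (x 0) (x 1)
    · exact QR_permV σ (x 0) (x 1) (x 2)

lemma E_inv {E : V M₀ → V M₀ → Prop} (φ : Leq.Formula (Fin 2))
    (h : ∀ u v, E u v ↔ φ.Realize ![u, v]) (σ : M₀ ≃ M₀) (u v : V M₀) :
    E (permV σ u) (permV σ v) ↔ E u v := by
  rw [h, h]
  have heq : ![permV σ u, permV σ v] = (permVE σ) ∘ ![u, v] := by
    funext i; fin_cases i <;> rfl
  rw [heq]
  exact StrongHomClass.realize_formula (permVE σ) φ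

lemma vfin (u : V M₀) : u.1.Finite :=
  Set.finite_of_ncard_ne_zero (by rw [u.2]; norm_num)

lemma inter_cases (u v : V M₀) (huv : u ≠ v) :
    u.1 ∩ v.1 = ∅ ∨ (u.1 ∩ v.1).ncard = 1 := by
  have hfin : (u.1 ∩ v.1).Finite := (vfin u).subset Set.inter_subset_left
  have hle : (u.1 ∩ v.1).ncard ≤ 2 :=
    le_of_le_of_eq (Set.ncard_le_ncard Set.inter_subset_left (vfin u)) u.2
  have h3 : (u.1 ∩ v.1).ncard = 0 ∨ (u.1 ∩ v.1).ncard = 1 ∨ (u.1 ∩ v.1).ncard = 2 := by omega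
  rcases h3 with h | h | h
  · exact Or.inl ((Set.ncard_eq_zero hfin).1 h)
  · exact Or.inr h
  · exfalso
    have e1 : u.1 ∩ v.1 = u.1 :=
      Set.eq_of_subset_of_ncard_le Set.inter_subset_left (by rw [h, u.2]) (vfin u)
    have e2 : u.1 ∩ v.1 = v.1 :=
      Set.eq_of_subset_of_ncard_le Set.inter_subset_right (by rw [h, v.2]) (vfin v)
    exact huv (Subtype.ext (e1 ▸ e2))

lemma adj_form (u v : V M₀) (h1 : (u.1 ∩ v.1).ncard = 1) :
    ∃ x a b, x ≠ a ∧ x ≠ b ∧ a ≠ b ∧ u.1 = {x, a} ∧ v.1 = {x, b} := by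
  obtain ⟨x, hx⟩ := Set.ncard_eq_one.1 h1
  have hxu : x ∈ u.1 := (hx ▸ Set.inter_subset_left) rfl
  have hxv : x ∈ v.1 := (hx ▸ Set.inter_subset_right) rfl
  obtain ⟨p, q, hpq, hu⟩ := Set.ncard_eq_two.1 u.2
  obtain ⟨r, t, hrt, hv⟩ := Set.ncard_eq_two.1 v.2
  have hxu' : x = p ∨ x = q := by rwa [hu, Set.mem_insert_iff, Set.mem_singleton_iff] at hxu
  have hxv' : x = r ∨ x = t := by rwa [hv, Set.mem_insert_iff, Set.mem_singleton_iff] at hxv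
  obtain ⟨a, hxa, hua⟩ : ∃ a, x ≠ a ∧ u.1 = {x, a} := by
    rcases hxu' with rfl | rfl
    · exact ⟨q, hpq, hu⟩
    · exact ⟨p, hpq.symm, by rw [hu, Set.pair_comm]⟩
  obtain ⟨b, hxb, hvb⟩ : ∃ b, x ≠ b ∧ v.1 = {x, b} := by
    rcases hxv' with rfl | rfl
    · exact ⟨t, hrt, hv⟩
    · exact ⟨r, hrt.symm, by rw [hv, Set.pair_comm]⟩
  refine ⟨x, a, b, hxa, hxb, ?_, hua, hvb⟩
  rintro rfl
  have : a ∈ u.1 ∩ v.1 := ⟨hua ▸ Set.mem_insert_of_mem _ rfl, hvb ▸ Set.mem_insert_of_mem _ rfl⟩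
  rw [hx, Set.mem_singleton_iff] at this
  exact hxa this.symm

lemma orbit_adj [Countable M₀] [Infinite M₀] {u v u' v' : V M₀}
    (h : (u.1 ∩ v.1).ncard = 1) (h' : (u'.1 ∩ v'.1).ncard = 1) :
    ∃ σ : M₀ ≃ M₀, permV σ u = u' ∧ permV σ v = v' := by
  obtain ⟨x, a, b, hxa, hxb, hab, hu, hv⟩ := adj_form u v h
  obtain ⟨x', a', b', hxa', hxb', hab', hu', hv'⟩ := adj_form u' v' h'
  obtain ⟨σ, h1, h2, h3⟩ := exists_perm_three hxa hxb hab hxa' hxb' hab'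
  refine ⟨σ, Subtype.ext ?_, Subtype.ext ?_⟩
  · rw [permV_fst, hu, Set.image_pair, h1, h2, hu']
  · rw [permV_fst, hv, Set.image_pair, h1, h3, hv']

lemma disj_form (u v : V M₀) (h : u.1 ∩ v.1 = ∅) :
    ∃ a b c d, a ≠ b ∧ a ≠ c ∧ a ≠ d ∧ b ≠ c ∧ b ≠ d ∧ c ≠ d ∧
      u.1 = {a, b} ∧ v.1 = {c, d} := by
  obtain ⟨a, b, hab, hu⟩ := Set.ncard_eq_two.1 u.2
  obtain ⟨c, d, hcd, hv⟩ := Set.ncard_eq_two.1 v.2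
  have hdisj : ∀ z, z ∈ u.1 → z ∈ v.1 → False := fun z h1 h2 =>
    Set.eq_empty_iff_forall_notMem.1 h z ⟨h1, h2⟩
  have ha : a ∈ u.1 := hu ▸ Set.mem_insert _ _
  have hb : b ∈ u.1 := hu ▸ Set.mem_insert_of_mem _ rfl
  have hc : c ∈ v.1 := hv ▸ Set.mem_insert _ _
  have hd : d ∈ v.1 := hv ▸ Set.mem_insert_of_mem _ rfl
  exact ⟨a, b, c, d, hab, fun e => hdisj a ha (e ▸ hc), fun e => hdisj a ha (e ▸ hd),
    fun e => hdisj b hb (e ▸ hc), fun e => hdisj b hb (e ▸ hd), hcd, hu, hv⟩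

lemma orbit_disj [Countable M₀] [Infinite M₀] {u v u' v' : V M₀}
    (h : u.1 ∩ v.1 = ∅) (h' : u'.1 ∩ v'.1 = ∅) :
    ∃ σ : M₀ ≃ M₀, permV σ u = u' ∧ permV σ v = v' := by
  obtain ⟨a, b, c, d, hab, hac, had, hbc, hbd, hcd, hu, hv⟩ := disj_form u v h
  obtain ⟨a', b', c', d', hab', hac', had', hbc', hbd', hcd', hu', hv'⟩ := disj_form u' v' h'
  obtain ⟨σ, h1, h2, h3, h4⟩ :=
    exists_perm_four hab hac had hbc hbd hcd hab' hac' had' hbc' hbd' hcd'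
  refine ⟨σ, Subtype.ext ?_, Subtype.ext ?_⟩
  · rw [permV_fst, hu, Set.image_pair, h1, h2, hu']
  · rw [permV_fst, hv, Set.image_pair, h3, h4, hv']

lemma pair_inter_pair {a b c : M₀} (hba : b ≠ a) (hbc : b ≠ c) :
    ({a, b} ∩ {a, c} : Set M₀) = {a} := by
  ext z
  simp only [Set.mem_inter_iff, Set.mem_insert_iff, Set.mem_singleton_iff]
  constructor
  · rintro ⟨rfl | rfl, h2⟩
    · rfl
    · rcases h2 with rfl | rfl
      · exact absurd rfl hba
      · exact absurd rfl hbc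
  · rintro rfl; exact ⟨Or.inl rfl, Or.inl rfl⟩

lemma pair_disj {a b c d : M₀} (h1 : a ≠ c) (h2 : a ≠ d) (h3 : b ≠ c) (h4 : b ≠ d) :
    ({a, b} ∩ {c, d} : Set M₀) = ∅ := by
  rw [Set.eq_empty_iff_forall_notMem]
  rintro z ⟨hz1, hz2⟩
  simp only [Set.mem_insert_iff, Set.mem_singleton_iff] at hz1 hz2
  rcases hz1 with rfl | rfl <;> rcases hz2 with rfl | rfl <;> simp_all

/-- A vertex built from two distinct points. -/
def vpair (a b : M₀) (h : a ≠ b) : V M₀ := ⟨{a, b}, Set.ncard_pair h⟩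

end Aux

/-- `G'` is primitive: every equivalence relation on `V` definable in `G'` by a
parameter-free first-order formula is equality or the full relation. -/
theorem Gprime_primitive (M₀ : Type) [Countable M₀] [Infinite M₀]
    (E : V M₀ → V M₀ → Prop) (hE : Equivalence E)
    (hdef : ∃ φ : Leq.Formula (Fin 2), ∀ u v : V M₀, E u v ↔ φ.Realize ![u, v]) :
    (∀ u v : V M₀, E u v ↔ u = v) ∨ (∀ u v : V M₀, E u v) := by
  obtain ⟨φ, hφ⟩ := hdef
  have inv : ∀ (σ : M₀ ≃ M₀) (u v : V M₀), E (permV σ u) (permV σ v) ↔ E u v := E_inv φ hφ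
  by_cases hne : ∃ u v : V M₀, E u v ∧ u ≠ v
  · right
    obtain ⟨u, v, hEuv, huv⟩ := hne
    have key : ∃ p q : V M₀, E p q ∧ (p.1 ∩ q.1).ncard = 1 := by
      rcases inter_cases u v huv with h0 | h1
      · -- all disjoint pairs are E-related; manufacture an adjacent pair
        have Edisj : ∀ p q : V M₀, p.1 ∩ q.1 = ∅ → E p q := by
          intro p q hpq
          obtain ⟨σ, h1, h2⟩ := orbit_disj h0 hpq
          rw [← h1, ← h2]; exact (inv σ u v).2 hEuv
        obtain f := Infinite.natEmbedding M₀
        have hf := f.injective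
        set a := f 0; set b := f 1; set c := f 2; set d := f 3; set e := f 4
        have hcd : c ≠ d := hf.ne (by decide)
        have hce : c ≠ e := hf.ne (by decide)
        have hde : d ≠ e := hf.ne (by decide)
        have h1 : E (vpair a b (hf.ne (by decide))) (vpair c d hcd) :=
          Edisj _ _ (pair_disj (hf.ne (by decide)) (hf.ne (by decide))
            (hf.ne (by decide)) (hf.ne (by decide)))
        have h2 : E (vpair a b (hf.ne (by decide))) (vpair c e hce) :=
          Edisj _ _ (pair_disj (hf.ne (by decide)) (hf.ne (by decide))
            (hf.ne (by decide)) (hf.ne (by decide)))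
        refine ⟨vpair c d hcd, vpair c e hce, hE.trans (hE.symm h1) h2, ?_⟩
        show (({c, d} : Set M₀) ∩ {c, e}).ncard = 1
        rw [pair_inter_pair hcd.symm hde, Set.ncard_singleton]
      · exact ⟨u, v, hEuv, h1⟩
    obtain ⟨p₀, q₀, hEpq, hadj⟩ := key
    have Eadj : ∀ p q : V M₀, (p.1 ∩ q.1).ncard = 1 → E p q := by
      intro p q h
      obtain ⟨σ, h1, h2⟩ := orbit_adj hadj h
      rw [← h1, ← h2]; exact (inv σ p₀ q₀).2 hEpq
    intro p q
    by_cases hpq : p = q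
    · exact hpq ▸ hE.refl p
    rcases inter_cases p q hpq with h0 | h1
    · obtain ⟨a, b, c, d, hab, hac, had, hbc, hbd, hcd, hp, hq⟩ := disj_form p q h0
      have h1 : E p (vpair a c hac) := by
        apply Eadj
        show (p.1 ∩ ({a, c} : Set M₀)).ncard = 1
        rw [hp, pair_inter_pair hab.symm hbc, Set.ncard_singleton]
      have h2 : E (vpair a c hac) q := by
        apply Eadj
        show ((({a, c} : Set M₀)) ∩ q.1).ncard = 1
        rw [hq, Set.pair_comm a c, pair_inter_pair hac had,
          Set.ncard_singleton]
      exact hE.trans h1 h2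
    · exact Eadj p q h1
  · left
    intro u v
    constructor
    · intro h
      by_contra hne'
      exact hne ⟨u, v, h, hne'⟩
    · rintro rfl; exact hE.refl u
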